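/- For an ω-bounded contract, let A be a cluster in (s, P), where s is reachable, and let ρ be a renaming of A. Then for every B ⊆ A: MEV_B(s, P) = MEV_{ρ(B)}(sρ, P). -/

import Mathlib

/-- An abstract contract over actors `Ac`, token types `Tk`, transactions `Tx` and
contract states `Γ`.  A blockchain state is a pair of a contract state and a wallet
state `Ac → Tk → ℕ`.  Wallet states of initial states, and of any state produced by the
transition function, satisfy the finite tokens axiom (finitely many nonzero entries,
i.e. finite total sum of naturals). -/
structure Contract (Ac Tk Tx Γ : Type*) where
  /-- The partial labelled transition function. -/
  step : Γ × (Ac → Tk → ℕ) → Tx → Option (Γ × (Ac → Tk → ℕ))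
  /-- The set of initial blockchain states. -/
  init : Set (Γ × (Ac → Tk → ℕ))
  initFin : ∀ s ∈ init, (Function.support fun p : Ac × Tk => s.2 p.1 p.2).Finite
  stepFin : ∀ s tx s', step s tx = some s' →
    (Function.support fun p : Ac × Tk => s'.2 p.1 p.2).Finite

namespace Contract

variable {Ac Tk Tx Γ : Type*}

/-- The induced total execution relation: process the transactions in order, applying
the partial transition function when defined (valid transaction) and leaving the state
unchanged otherwise. -/
def exec (C : Contract Ac Tk Tx Γ) :
    Γ × (Ac → Tk → ℕ) → List Tx → Γ × (Ac → Tk → ℕ)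
  | s, [] => s
  | s, tx :: X => C.exec ((C.step s tx).getD s) X

/-- A state is reachable if some initial state reaches it by some sequence. -/
def Reachable (C : Contract Ac Tk Tx Γ) (s : Γ × (Ac → Tk → ℕ)) : Prop :=
  ∃ s₀ ∈ C.init, ∃ X : List Tx, C.exec s₀ X = s

end Contract

/-- The combined wallet of a set of actors `A` in a blockchain state `s`. -/
noncomputable def wal {Ac Tk Γ : Type*} (s : Γ × (Ac → Tk → ℕ)) (A : Set Ac) : Tk → ℕ :=
  fun t => ∑ᶠ a ∈ A, s.2 a t

/-- `ω` is a wealth function: additive on finite-support wallets. -/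
def IsWealth {Tk : Type*} (ω : (Tk → ℕ) → ℕ) : Prop :=
  ∀ w₀ w₁ : Tk → ℕ, (Function.support w₀).Finite → (Function.support w₁).Finite →
    ω (w₀ + w₁) = ω w₀ + ω w₁

/-- The gain `γ_A(s, X)` of actors `A` upon performing the sequence `X` from `s`. -/
noncomputable def Contract.gain {Ac Tk Tx Γ : Type*} (C : Contract Ac Tk Tx Γ) (ω : (Tk → ℕ) → ℕ)
    (A : Set Ac) (s : Γ × (Ac → Tk → ℕ)) (X : List Tx) : ℤ :=
  (ω (wal (C.exec s X) A) : ℤ) - (ω (wal s A) : ℤ)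

/-- ω-boundedness: the total wealth of all states reachable from an initial state is
bounded by a constant depending only on that initial state. -/
def Contract.Bounded {Ac Tk Tx Γ : Type*} (C : Contract Ac Tk Tx Γ)
    (ω : (Tk → ℕ) → ℕ) : Prop :=
  ∀ s₀ ∈ C.init, ∃ n : ℕ, ∀ X : List Tx, ω (wal (C.exec s₀ X) Set.univ) < n

/-- A transaction deducibility function `Λ`, mapping a set of actors and a set of
transactions to the set of transactions they can deduce, satisfying the axioms of
Definition "Transaction deducibility axioms". -/
structure Deducibility (Ac Tx : Type*) where
  L : Set Ac → Set Tx → Set Tx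
  extensive : ∀ (A : Set Ac) (T : Set Tx), T ⊆ L A T
  idem : ∀ (A : Set Ac) (T : Set Tx), L A (L A T) = L A T
  mono : ∀ ⦃A A' : Set Ac⦄ ⦃T T' : Set Tx⦄, A ⊆ A' → T ⊆ T' → L A T ⊆ L A' T'
  cont : ∀ (A : Set Ac) (Ti : ℕ → Set Tx), Monotone Ti →
    L A (⋃ i, Ti i) = ⋃ i, L A (Ti i)
  finCauses : ∀ T : Set Tx, T.Finite → ∃ A : Set Ac, A.Finite ∧ T ⊆ L A ∅
  privKnow : ∀ A A' : Set Ac, L A ∅ ⊆ L A' ∅ → A ⊆ A'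
  noShared : ∀ (A B : Set Ac) (T : Set Tx), L A T ∩ L B T ⊆ L (A ∩ B) T

/-- `X` is a finite sequence over the set `K` of transactions. -/
def SeqOver {Tx : Type*} (K : Set Tx) (X : List Tx) : Prop := ∀ tx ∈ X, tx ∈ K

/-- The set of gains obtainable by `A` in `s` by firing sequences deducible from their
private knowledge only; the unrealized gain `u_A(s)` is its greatest element. -/
def ugainSet {Ac Tk Tx Γ : Type*} (C : Contract Ac Tk Tx Γ) (ω : (Tk → ℕ) → ℕ)
    (D : Deducibility Ac Tx) (A : Set Ac) (s : Γ × (Ac → Tk → ℕ)) : Set ℤ :=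
  {g : ℤ | ∃ X : List Tx, SeqOver (D.L A ∅) X ∧ g = C.gain ω A s X}

/-- The set of external gains obtainable by `A` in `(s, P)` (`u` being the unrealized
gain `u_A(s)`); `MEV_A(s, P)` is its greatest element. -/
def mevSet {Ac Tk Tx Γ : Type*} (C : Contract Ac Tk Tx Γ) (ω : (Tk → ℕ) → ℕ)
    (D : Deducibility Ac Tx) (A : Set Ac) (s : Γ × (Ac → Tk → ℕ)) (P : Set Tx)
    (u : ℤ) : Set ℤ :=
  {g : ℤ | ∃ X : List Tx, SeqOver (D.L A P) X ∧ g = C.gain ω A s X - u}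

/-- `ρ` is a renaming of the set of actors `A`: a permutation of the actors fixing every
actor outside `A`. -/
def IsRenaming {Ac : Type*} (A : Set Ac) (ρ : Equiv.Perm Ac) : Prop :=
  ∀ a ∉ A, ρ a = a

/-- The action of a renaming on a blockchain state: `(Wρ)(a) = W(ρ⁻¹ a)`, the contract
state is unchanged.  (For a renaming of `A` this agrees with the definition acting as
the identity outside `A`, since `ρ⁻¹` fixes every actor outside `A`.) -/
def renameSt {Ac Tk Γ : Type*} (ρ : Equiv.Perm Ac) (s : Γ × (Ac → Tk → ℕ)) :
    Γ × (Ac → Tk → ℕ) :=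
  (s.1, fun a => s.2 (ρ.symm a))

/-- `A` is a cluster in `(s, P)`: for all renamings `ρ₀, ρ₁` of `A`, all `B ⊆ A`,
all `Y ⊆ P` and every sequence `X` over `Λ_{ρ₀(B)}(Y)` fired from `sρ₀`, there is a
sequence `X'` over `Λ_{ρ₁(B)}(Y)` fired from `sρ₁` whose final wallet state is the final
wallet state of the former run acted on by `ρ₀⁻¹` followed by `ρ₁`. -/
def IsCluster {Ac Tk Tx Γ : Type*} (C : Contract Ac Tk Tx Γ) (D : Deducibility Ac Tx)
    (A : Set Ac) (s : Γ × (Ac → Tk → ℕ)) (P : Set Tx) : Prop :=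
  ∀ ρ₀ ρ₁ : Equiv.Perm Ac, IsRenaming A ρ₀ → IsRenaming A ρ₁ →
    ∀ B : Set Ac, B ⊆ A → ∀ Y : Set Tx, Y ⊆ P → ∀ X : List Tx,
      SeqOver (D.L (⇑ρ₀ '' B) Y) X →
      ∃ X' : List Tx, SeqOver (D.L (⇑ρ₁ '' B) Y) X' ∧
        (C.exec (renameSt ρ₁ s) X').2 =
          fun a => (C.exec (renameSt ρ₀ s) X).2 (ρ₀ (ρ₁.symm a))

def gainSet {Ac Tk Tx Γ : Type*} (C : Contract Ac Tk Tx Γ) (ω : (Tk → ℕ) → ℕ)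
    (A : Set Ac) (s : Γ × (Ac → Tk → ℕ)) (K : Set Tx) : Set ℤ :=
  {g : ℤ | ∃ X : List Tx, SeqOver K X ∧ g = C.gain ω A s X}

section Renaming

variable {Ac Tk Tx Γ : Type*}

theorem ugainSet_eq_gainSet (C : Contract Ac Tk Tx Γ) (ω : (Tk → ℕ) → ℕ)
    (D : Deducibility Ac Tx) (A : Set Ac) (s : Γ × (Ac → Tk → ℕ)) :
    ugainSet C ω D A s = gainSet C ω A s (D.L A ∅) :=
  rfl

theorem mevSet_eq_image_gainSet (C : Contract Ac Tk Tx Γ) (ω : (Tk → ℕ) → ℕ)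
    (D : Deducibility Ac Tx) (A : Set Ac) (s : Γ × (Ac → Tk → ℕ)) (P : Set Tx) (u : ℤ) :
    mevSet C ω D A s P u = (· - u) '' gainSet C ω A s (D.L A P) := by
  ext g
  constructor
  · rintro ⟨X, hX, rfl⟩
    exact ⟨_, ⟨X, hX, rfl⟩, rfl⟩
  · rintro ⟨_, ⟨X, hX, rfl⟩, rfl⟩
    exact ⟨X, hX, rfl⟩

theorem renameSt_one (s : Γ × (Ac → Tk → ℕ)) : renameSt (1 : Equiv.Perm Ac) s = s :=
  rfl

theorem wal_image_eq_of_wallet_eq {s r : Γ × (Ac → Tk → ℕ)} (ρ₀ ρ₁ : Equiv.Perm Ac)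
    (h : r.2 = fun a => s.2 (ρ₀ (ρ₁.symm a))) (B : Set Ac) :
    wal r (⇑ρ₁ '' B) = wal s (⇑ρ₀ '' B) := by
  funext t
  simp only [wal, h, finsum_mem_image ρ₁.injective.injOn,
    finsum_mem_image ρ₀.injective.injOn, Equiv.symm_apply_apply]

theorem wal_renameSt_image (ρ : Equiv.Perm Ac) (s : Γ × (Ac → Tk → ℕ)) (B : Set Ac) :
    wal (renameSt ρ s) (⇑ρ '' B) = wal s B := by
  simpa using wal_image_eq_of_wallet_eq (s := s) (r := renameSt ρ s) 1 ρ rfl B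

variable {C : Contract Ac Tk Tx Γ} {D : Deducibility Ac Tx} {A : Set Ac}
  {s : Γ × (Ac → Tk → ℕ)} {P : Set Tx}

/-- The cluster property transports a run of `ρ₀(B)` from `sρ₀` to a run of `ρ₁(B)` from
`sρ₁` whose final wallets are a renaming of each other, so both runs have the same gain. -/
theorem IsCluster.gainSet_subset (hA : IsCluster C D A s P) (ω : (Tk → ℕ) → ℕ)
    {ρ₀ ρ₁ : Equiv.Perm Ac} (h₀ : IsRenaming A ρ₀) (h₁ : IsRenaming A ρ₁)
    {B : Set Ac} (hB : B ⊆ A) {Y : Set Tx} (hY : Y ⊆ P) :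
    gainSet C ω (⇑ρ₀ '' B) (renameSt ρ₀ s) (D.L (⇑ρ₀ '' B) Y) ⊆
      gainSet C ω (⇑ρ₁ '' B) (renameSt ρ₁ s) (D.L (⇑ρ₁ '' B) Y) := by
  rintro _ ⟨X, hX, rfl⟩
  obtain ⟨X', hX', hw⟩ := hA ρ₀ ρ₁ h₀ h₁ B hB Y hY X hX
  refine ⟨X', hX', ?_⟩
  simp only [Contract.gain, wal_image_eq_of_wallet_eq ρ₀ ρ₁ hw, wal_renameSt_image]

theorem IsCluster.gainSet_renameSt (hA : IsCluster C D A s P) (ω : (Tk → ℕ) → ℕ)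
    {ρ : Equiv.Perm Ac} (hρ : IsRenaming A ρ) {B : Set Ac} (hB : B ⊆ A)
    {Y : Set Tx} (hY : Y ⊆ P) :
    gainSet C ω B s (D.L B Y) =
      gainSet C ω (⇑ρ '' B) (renameSt ρ s) (D.L (⇑ρ '' B) Y) := by
  have hone : IsRenaming A (1 : Equiv.Perm Ac) := fun _ _ => rfl
  have h₁ := hA.gainSet_subset ω hone hρ hB hY
  have h₂ := hA.gainSet_subset ω hρ hone hB hY
  simp only [Equiv.Perm.coe_one, Set.image_id, renameSt_one] at h₁ h₂
  exact h₁.antisymm h₂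

end Renaming

theorem mev_cluster_renaming_general
    {Ac Tk Tx Γ : Type*}
    (C : Contract Ac Tk Tx Γ) (ω : (Tk → ℕ) → ℕ)
    (D : Deducibility Ac Tx)
    (A : Set Ac) (s : Γ × (Ac → Tk → ℕ)) (P : Set Tx)
    (hA : IsCluster C D A s P)
    (ρ : Equiv.Perm Ac) (hρ : IsRenaming A ρ)
    (B : Set Ac) (hB : B ⊆ A)
    (u u' m m' : ℤ)
    (hu : IsGreatest (ugainSet C ω D B s) u)
    (hu' : IsGreatest (ugainSet C ω D (⇑ρ '' B) (renameSt ρ s)) u')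
    (hm : IsGreatest (mevSet C ω D B s P u) m)
    (hm' : IsGreatest (mevSet C ω D (⇑ρ '' B) (renameSt ρ s) P u') m') :
    m = m' := by
  have hgain := fun Y (hY : Y ⊆ P) => hA.gainSet_renameSt ω hρ hB hY
  have hu_eq : u = u' := by
    rw [ugainSet_eq_gainSet, hgain ∅ (Set.empty_subset P)] at hu
    exact hu.unique hu'
  rw [mevSet_eq_image_gainSet, hgain P subset_rfl, hu_eq] at hm
  rw [mevSet_eq_image_gainSet] at hm'
  exact hm.unique hm'

/-- for an ω-bounded contract, if `A` is a cluster in `(s, P)` with `s`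
reachable, and `ρ` is a renaming of `A`, then for every `B ⊆ A`:
`MEV_B(s, P) = MEV_{ρ(B)}(sρ, P)`. -/
theorem mev_cluster_renaming
    {Ac Tk Tx Γ : Type*} [Countable Ac] [Infinite Ac]
    (C : Contract Ac Tk Tx Γ) (ω : (Tk → ℕ) → ℕ) (hω : IsWealth ω)
    (hb : C.Bounded ω) (D : Deducibility Ac Tx)
    (A : Set Ac) (s : Γ × (Ac → Tk → ℕ)) (hs : C.Reachable s) (P : Set Tx)
    (hA : IsCluster C D A s P)
    (ρ : Equiv.Perm Ac) (hρ : IsRenaming A ρ)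
    (B : Set Ac) (hB : B ⊆ A)
    (u u' m m' : ℤ)
    (hu : IsGreatest (ugainSet C ω D B s) u)
    (hu' : IsGreatest (ugainSet C ω D (⇑ρ '' B) (renameSt ρ s)) u')
    (hm : IsGreatest (mevSet C ω D B s P u) m)
    (hm' : IsGreatest (mevSet C ω D (⇑ρ '' B) (renameSt ρ s) P u') m') :
    m = m' :=
  mev_cluster_renaming_general C ω D A s P hA ρ hρ B hB u u' m m' hu hu' hm hm'
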